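/- arXiv:1111.2069 — 6 statements merged into one kernel-verified Lean document; each statement's English description precedes it below -/
import Mathlib

section
/- Let n ≥ 1, let P_1, …, P_n be invertible 2×2 real matrices, Q_1, …, Q_n be 2×2 real matrices, ν_1, …, ν_n ∈ ℝ, C_0 = (1,0)ᵀ and D_0 = (0,1)ᵀ. Define R_n = P_n ⋯ P_1, S_n = Σ_{j=1}^{n} ν_j P_n ⋯ P_{j+1} Q_j, and set P̃_i = P_i^{−1}, Q̃_i = −P_i^{−1} Q_i, R̃_n = P̃_1 P̃_2 ⋯ P̃_n, S̃_n = Σ_{j=1}^{n} ν_j P̃_1 ⋯ P̃_{j−1} Q̃_j. Assume the first entry of R_n C_0 is nonzero, and put γ_0 = −(first entry of S_n C_0)/(first entry of R_n C_0) and δ_n = γ_0·(second entry of R_n C_0) + (second entry of S_n C_0). Then δ_n·(second entry of R̃_n D_0) + (second entry of S̃_n C_0) = 0. -/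
/-!
Running the recursion backwards inverts it: `R̃ₙ Rₙ = 1` and `S̃ₙ = -R̃ₙ Sₙ`. The choice of `γ₀`
makes `Sₙ C₀ + γ₀ Rₙ C₀ = δₙ D₀`; applying `R̃ₙ` and reading off the second entry gives the identity,
since `R̃ₙ Rₙ C₀ = C₀` has second entry `0`.
-/

open Matrix

/-- `Rprod P i = P i * P (i-1) * ⋯ * P 1`, with `Rprod P 0 = 1`. -/
noncomputable def Rprod (P : ℕ → Matrix (Fin 2) (Fin 2) ℝ) : ℕ → Matrix (Fin 2) (Fin 2) ℝ
  | 0 => 1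
  | i + 1 => P (i + 1) * Rprod P i

/-- `Ssum P Q ν i = Σ_{j=1}^{i} ν j • (P i * ⋯ * P (j+1) * Q j)`, with `Ssum P Q ν 0 = 0`. -/
noncomputable def Ssum (P Q : ℕ → Matrix (Fin 2) (Fin 2) ℝ) (ν : ℕ → ℝ) :
    ℕ → Matrix (Fin 2) (Fin 2) ℝ
  | 0 => 0
  | i + 1 => ν (i + 1) • Q (i + 1) + P (i + 1) * Ssum P Q ν i

/-- `Rtil P i = P̃ 1 * P̃ 2 * ⋯ * P̃ i` where `P̃ j = (P j)⁻¹`. -/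
noncomputable def Rtil (P : ℕ → Matrix (Fin 2) (Fin 2) ℝ) : ℕ → Matrix (Fin 2) (Fin 2) ℝ
  | 0 => 1
  | i + 1 => Rtil P i * (P (i + 1))⁻¹

/-- `Stil P Q ν i = Σ_{j=1}^{i} ν j • (P̃ 1 * ⋯ * P̃ (j-1) * Q̃ j)` where `P̃ j = (P j)⁻¹`
and `Q̃ j = −(P j)⁻¹ * Q j`. -/
noncomputable def Stil (P Q : ℕ → Matrix (Fin 2) (Fin 2) ℝ) (ν : ℕ → ℝ) :
    ℕ → Matrix (Fin 2) (Fin 2) ℝ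
  | 0 => 0
  | i + 1 => Stil P Q ν i + ν (i + 1) • (Rtil P i * (-((P (i + 1))⁻¹ * Q (i + 1))))

theorem Rtil_succ_mul_self (P : ℕ → Matrix (Fin 2) (Fin 2) ℝ) (k : ℕ) (hP : IsUnit (P (k + 1))) :
    Rtil P (k + 1) * P (k + 1) = Rtil P k := by
  rw [Rtil, mul_assoc, nonsing_inv_mul _ ((isUnit_iff_isUnit_det _).mp hP), mul_one]

theorem Rtil_mul_Rprod (P : ℕ → Matrix (Fin 2) (Fin 2) ℝ) (n : ℕ)
    (hinv : ∀ i, 1 ≤ i → i ≤ n → IsUnit (P i)) : Rtil P n * Rprod P n = 1 := by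
  induction n with
  | zero => exact mul_one 1
  | succ k ih =>
    rw [Rprod, ← mul_assoc, Rtil_succ_mul_self P k (hinv _ k.succ_pos le_rfl),
      ih fun i hi hik => hinv i hi (hik.trans k.le_succ)]

theorem Rtil_mul_Ssum (P Q : ℕ → Matrix (Fin 2) (Fin 2) ℝ) (ν : ℕ → ℝ) (n : ℕ)
    (hinv : ∀ i, 1 ≤ i → i ≤ n → IsUnit (P i)) : Rtil P n * Ssum P Q ν n = -Stil P Q ν n := by
  induction n with
  | zero => simp [Ssum, Stil]
  | succ k ih =>
    have hS := ih fun i hi hik => hinv i hi (hik.trans k.le_succ)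
    rw [Ssum, mul_add, ← mul_assoc, Rtil_succ_mul_self P k (hinv _ k.succ_pos le_rfl), hS, Stil,
      Rtil, mul_smul_comm, mul_neg, smul_neg, mul_assoc]
    abel

theorem mulVec_apply_one_eq_of_mulVec_apply_one_eq_zero {K : Type*} [Field K]
    (T : Matrix (Fin 2) (Fin 2) K) (r s : Fin 2 → K) (hr : r 0 ≠ 0) (hTr : (T *ᵥ r) 1 = 0) :
    (-s 0 / r 0 * r 1 + s 1) * (T *ᵥ ![0, 1]) 1 = (T *ᵥ s) 1 := by
  simp only [mulVec, dotProduct, Fin.sum_univ_two] at hTr ⊢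
  simp only [cons_val_zero, cons_val_one, cons_val_fin_one, mul_zero, mul_one, zero_add]
  field_simp
  linear_combination (-s 0) * hTr

theorem statement4_general (n : ℕ)
    (P Q : ℕ → Matrix (Fin 2) (Fin 2) ℝ) (ν : ℕ → ℝ)
    (hinv : ∀ i, 1 ≤ i → i ≤ n → IsUnit (P i))
    (hR : ((Rprod P n).mulVec ![1, 0]) 0 ≠ 0)
    (γ₀ δₙ : ℝ)
    (hγ : γ₀ = -(((Ssum P Q ν n).mulVec ![1, 0]) 0) / (((Rprod P n).mulVec ![1, 0]) 0))
    (hδ : δₙ = γ₀ * (((Rprod P n).mulVec ![1, 0]) 1) + ((Ssum P Q ν n).mulVec ![1, 0]) 1) :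
    δₙ * (((Rtil P n).mulVec ![0, 1]) 1) + ((Stil P Q ν n).mulVec ![1, 0]) 1 = 0 := by
  have hTr : Rtil P n *ᵥ (Rprod P n *ᵥ ![1, 0]) = ![1, 0] := by
    rw [mulVec_mulVec, Rtil_mul_Rprod P n hinv, one_mulVec]
  have hTs : Stil P Q ν n *ᵥ ![1, 0] = -(Rtil P n *ᵥ (Ssum P Q ν n *ᵥ ![1, 0])) := by
    rw [mulVec_mulVec, Rtil_mul_Ssum P Q ν n hinv, neg_mulVec, neg_neg]
  rw [hδ, hγ, hTs, Pi.neg_apply,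
    mulVec_apply_one_eq_of_mulVec_apply_one_eq_zero _ _ _ hR (by rw [hTr]; rfl), add_neg_cancel]

/-- the two expressions for the coefficient `δₙ` obtained by running the
solution algorithm forwards and backwards agree:
`δₙ (R̃ₙ D₀)₂ + (S̃ₙ C₀)₂ = 0`. -/
theorem statement4 (n : ℕ) (hn : 1 ≤ n)
    (P Q : ℕ → Matrix (Fin 2) (Fin 2) ℝ) (ν : ℕ → ℝ)
    (hinv : ∀ i, 1 ≤ i → i ≤ n → IsUnit (P i))
    (hR : ((Rprod P n).mulVec ![1, 0]) 0 ≠ 0)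
    (γ₀ δₙ : ℝ)
    (hγ : γ₀ = -(((Ssum P Q ν n).mulVec ![1, 0]) 0) / (((Rprod P n).mulVec ![1, 0]) 0))
    (hδ : δₙ = γ₀ * (((Rprod P n).mulVec ![1, 0]) 1) + ((Ssum P Q ν n).mulVec ![1, 0]) 1) :
    δₙ * (((Rtil P n).mulVec ![0, 1]) 1) + ((Stil P Q ν n).mulVec ![1, 0]) 1 = 0 :=
  statement4_general n P Q ν hinv hR γ₀ δₙ hγ hδ
end

section
/- Let λ > 0, μ > 0 and x, y ∈ ℝ, and set z = √(λ+μ)·(y−x). Then N(y)^{−1}·M(y)·M(x)^{−1} − N(y)^{−1} equals sinh(z/2) times the 2×2 matrix with entries: (1,1) entry e^{−√λ y}[√((λ+μ)/λ)·cosh(z/2) + sinh(z/2)]; (1,2) entry (e^{−√λ y}/√λ)[√(λ/(λ+μ))·cosh(z/2) + sinh(z/2)]; (2,1) entry e^{√λ y}[−√((λ+μ)/λ)·cosh(z/2) + sinh(z/2)]; (2,2) entry (e^{√λ y}/√λ)[√(λ/(λ+μ))·cosh(z/2) − sinh(z/2)]. -/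
open Matrix Real

/-! Since `M(y) - M(x) = N(y) S M(x)` for the claimed matrix `S`, multiplying by `N(y)⁻¹` on the
left and by `M(x)⁻¹` on the right gives the statement. The factorisation itself is checked entrywise
after writing `sinh (z/2)`, `cosh (z/2)` through `p = e^{z/2}` and using `e^{√(λ+μ) y} = p² e^{√(λ+μ) x}`. -/

/-- The fundamental matrix `N(x)` associated with parameter `λ`:
`N(x) = ((e^{√λ x}, e^{−√λ x}), (√λ e^{√λ x}, −√λ e^{−√λ x}))`.
The matrix `M(x)` of the paper is `Nmat (λ+μ) x`. -/
noncomputable def Nmat (lam x : ℝ) : Matrix (Fin 2) (Fin 2) ℝ :=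
  !![Real.exp (Real.sqrt lam * x), Real.exp (-(Real.sqrt lam * x));
     Real.sqrt lam * Real.exp (Real.sqrt lam * x),
       -(Real.sqrt lam * Real.exp (-(Real.sqrt lam * x)))]

lemma Nmat_det (lam x : ℝ) : (Nmat lam x).det = -(2 * √lam) := by
  have h : exp (√lam * x) * exp (-(√lam * x)) = 1 := by rw [← exp_add]; simp
  simp only [Nmat, det_fin_two_of]
  linear_combination (-(2 * √lam)) * h

lemma isUnit_det_Nmat {lam : ℝ} (hlam : 0 < lam) (x : ℝ) : IsUnit (Nmat lam x).det := by
  rw [Nmat_det, isUnit_iff_ne_zero]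
  simpa using (sqrt_pos.2 hlam).ne'

theorem Matrix.inv_mul_mul_inv_sub_inv_of_sub_eq {n α : Type*} [Fintype n] [DecidableEq n]
    [CommRing α] {A B C S : Matrix n n α} (hA : IsUnit A.det) (hC : IsUnit C.det)
    (h : B - C = A * S * C) : A⁻¹ * B * C⁻¹ - A⁻¹ = S := by
  calc A⁻¹ * B * C⁻¹ - A⁻¹ = A⁻¹ * (B - C) * C⁻¹ := by
        rw [Matrix.mul_sub, Matrix.sub_mul, mul_nonsing_inv_cancel_right _ _ hC]
    _ = S := by
        rw [h, ← Matrix.mul_assoc, ← Matrix.mul_assoc, nonsing_inv_mul _ hA, Matrix.one_mul,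
          mul_nonsing_inv_cancel_right _ _ hC]

noncomputable def jumpMatrix (lam mu y z : ℝ) : Matrix (Fin 2) (Fin 2) ℝ :=
  sinh (z / 2) •
    !![exp (-(√lam * y)) * (√((lam + mu) / lam) * cosh (z / 2) + sinh (z / 2)),
        exp (-(√lam * y)) / √lam * (√(lam / (lam + mu)) * cosh (z / 2) + sinh (z / 2));
      exp (√lam * y) * (-(√((lam + mu) / lam) * cosh (z / 2)) + sinh (z / 2)),
        exp (√lam * y) / √lam * (√(lam / (lam + mu)) * cosh (z / 2) - sinh (z / 2))]

lemma Nmat_sub_Nmat_eq_mul_jumpMatrix {lam mu : ℝ} (hlam : 0 < lam) (hlm : 0 < lam + mu)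
    (x y : ℝ) :
    Nmat (lam + mu) y - Nmat (lam + mu) x =
      Nmat lam y * jumpMatrix lam mu y (√(lam + mu) * (y - x)) * Nmat (lam + mu) x := by
  unfold jumpMatrix Nmat
  set a := √lam
  set b := √(lam + mu)
  set z := b * (y - x)
  set p := exp (z / 2)
  have ha : a ≠ 0 := (sqrt_pos.2 hlam).ne'
  have hb : b ≠ 0 := (sqrt_pos.2 hlm).ne'
  have hp : p ≠ 0 := (exp_pos _).ne'
  have hba : √((lam + mu) / lam) = b / a := sqrt_div' _ hlam.le
  have hab : √(lam / (lam + mu)) = a / b := sqrt_div' _ hlm.le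
  have hsinh : sinh (z / 2) = (p - p⁻¹) / 2 := by rw [sinh_eq, exp_neg]
  have hcosh : cosh (z / 2) = (p + p⁻¹) / 2 := by rw [cosh_eq, exp_neg]
  have hby : exp (b * y) = p ^ 2 * exp (b * x) := by
    rw [← exp_nat_mul, ← exp_add]; congr 1; ring
  ext i j
  fin_cases i <;> fin_cases j <;>
    · simp only [mul_apply, Fin.sum_univ_two, Matrix.smul_apply, Matrix.sub_apply, of_apply,
        Matrix.cons_val', Matrix.cons_val_zero, Matrix.cons_val_one, Matrix.empty_val',
        Matrix.cons_val_fin_one, smul_eq_mul, Fin.isValue, Fin.mk_zero, Fin.mk_one,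
        hba, hab, Real.exp_neg, hby, hsinh, hcosh]
      field_simp
      ring

/-- the explicit form of `N(y)⁻¹ M(y) M(x)⁻¹ − N(y)⁻¹`,
with `z = √(λ+μ)(y−x)`. -/
theorem statement8 (lam mu x y : ℝ) (hlam : 0 < lam) (hmu : 0 < mu)
    (z : ℝ) (hz : z = Real.sqrt (lam + mu) * (y - x)) :
    (Nmat lam y)⁻¹ * Nmat (lam + mu) y * (Nmat (lam + mu) x)⁻¹ - (Nmat lam y)⁻¹ =
      Real.sinh (z / 2) •
        !![Real.exp (-(Real.sqrt lam * y)) *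
              (Real.sqrt ((lam + mu) / lam) * Real.cosh (z / 2) + Real.sinh (z / 2)),
            Real.exp (-(Real.sqrt lam * y)) / Real.sqrt lam *
              (Real.sqrt (lam / (lam + mu)) * Real.cosh (z / 2) + Real.sinh (z / 2));
          Real.exp (Real.sqrt lam * y) *
              (-(Real.sqrt ((lam + mu) / lam) * Real.cosh (z / 2)) + Real.sinh (z / 2)),
            Real.exp (Real.sqrt lam * y) / Real.sqrt lam *
              (Real.sqrt (lam / (lam + mu)) * Real.cosh (z / 2) - Real.sinh (z / 2))] := by
  have hlm : 0 < lam + mu := by linarith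
  subst hz
  exact inv_mul_mul_inv_sub_inv_of_sub_eq (isUnit_det_Nmat hlam y) (isUnit_det_Nmat hlm x)
    (Nmat_sub_Nmat_eq_mul_jumpMatrix hlam hlm x y)
end

section
/- Let λ > 0, μ > 0 and x, y ∈ ℝ, and set z = √(λ+μ)·(y−x). Then N(y)^{−1}·M(y)·M(x)^{−1}·N(x) equals (1/√(λ(λ+μ))) times the 2×2 matrix with entries: (1,1) entry e^{√λ(x−y)}·[√λ·cosh(z/2) + √(λ+μ)·sinh(z/2)]·[√(λ+μ)·cosh(z/2) + √λ·sinh(z/2)]; (1,2) entry μ·e^{−√λ(x+y)}·cosh(z/2)·sinh(z/2); (2,1) entry −μ·e^{√λ(x+y)}·cosh(z/2)·sinh(z/2); (2,2) entry e^{√λ(y−x)}·[√λ·cosh(z/2) − √(λ+μ)·sinh(z/2)]·[√(λ+μ)·cosh(z/2) − √λ·sinh(z/2)]. -/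
open Matrix Real

/-!
The columns of `Nmat L x` are the solutions `e^{±√L x}` of `u'' = L u` together with their
derivatives, so `M(y) M(x)⁻¹` is the propagator of `u'' = (λ+μ) u` from `x` to `y`: the hyperbolic
rotation `((cosh z, sinh z / b), (b sinh z, cosh z))` with `b = √(λ+μ)`. Conjugating a matrix of
this shape by `N` is an explicit computation, and the half-angle formulas
`cosh z = cosh² (z/2) + sinh² (z/2)`, `sinh z = 2 sinh (z/2) cosh (z/2)` factor the entries.
-/

section

variable {L : ℝ}

theorem Nmat_inv (hL : 0 < L) (x : ℝ) :
    (Nmat L x)⁻¹ =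
      !![exp (-(√L * x)) / 2, exp (-(√L * x)) / (2 * √L);
         exp (√L * x) / 2, -(exp (√L * x) / (2 * √L))] := by
  have : √L ≠ 0 := (sqrt_pos.2 hL).ne'
  refine inv_eq_right_inv ?_
  ext i j
  fin_cases i <;> fin_cases j <;>
    simp [Nmat, mul_apply, exp_neg] <;> field_simp <;> ring

theorem Nmat_mul_Nmat_inv (hL : 0 < L) (x y : ℝ) :
    Nmat L y * (Nmat L x)⁻¹ =
      !![cosh (√L * (y - x)), sinh (√L * (y - x)) / √L;
         √L * sinh (√L * (y - x)), cosh (√L * (y - x))] := by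
  have : √L ≠ 0 := (sqrt_pos.2 hL).ne'
  rw [Nmat_inv hL]
  ext i j
  fin_cases i <;> fin_cases j <;>
    simp [Nmat, mul_apply, cosh_eq, sinh_eq, mul_sub, exp_sub, exp_neg] <;> field_simp <;> ring

theorem Nmat_inv_mul_mul_Nmat (hL : 0 < L) {b : ℝ} (hb : b ≠ 0) (C S x y : ℝ) :
    (Nmat L y)⁻¹ * !![C, S / b; b * S, C] * Nmat L x =
      (1 / (2 * √L * b)) •
        !![exp (√L * (x - y)) * (2 * √L * b * C + (L + b ^ 2) * S),
            exp (-(√L * (x + y))) * ((b ^ 2 - L) * S);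
          -(exp (√L * (x + y)) * ((b ^ 2 - L) * S)),
            exp (√L * (y - x)) * (2 * √L * b * C - (L + b ^ 2) * S)] := by
  have : √L ≠ 0 := (sqrt_pos.2 hL).ne'
  rw [Nmat_inv hL]
  ext i j
  fin_cases i <;> fin_cases j <;>
    simp [Nmat, mul_apply, mul_sub, mul_add, exp_sub, exp_add, exp_neg] <;> field_simp <;>
    ring_nf <;> rw [sq_sqrt hL.le] <;> ring

end

/-- the explicit form of `N(y)⁻¹ M(y) M(x)⁻¹ N(x)`,
with `z = √(λ+μ)(y−x)`. -/
theorem statement9 (lam mu x y : ℝ) (hlam : 0 < lam) (hmu : 0 < mu)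
    (z : ℝ) (hz : z = Real.sqrt (lam + mu) * (y - x)) :
    (Nmat lam y)⁻¹ * Nmat (lam + mu) y * (Nmat (lam + mu) x)⁻¹ * Nmat lam x =
      (1 / Real.sqrt (lam * (lam + mu))) •
        !![Real.exp (Real.sqrt lam * (x - y)) *
              ((Real.sqrt lam * Real.cosh (z / 2) + Real.sqrt (lam + mu) * Real.sinh (z / 2)) *
                (Real.sqrt (lam + mu) * Real.cosh (z / 2) + Real.sqrt lam * Real.sinh (z / 2))),
            mu * Real.exp (-(Real.sqrt lam * (x + y))) * Real.cosh (z / 2) * Real.sinh (z / 2);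
          -(mu * Real.exp (Real.sqrt lam * (x + y)) * Real.cosh (z / 2) * Real.sinh (z / 2)),
            Real.exp (Real.sqrt lam * (y - x)) *
              ((Real.sqrt lam * Real.cosh (z / 2) - Real.sqrt (lam + mu) * Real.sinh (z / 2)) *
                (Real.sqrt (lam + mu) * Real.cosh (z / 2) - Real.sqrt lam * Real.sinh (z / 2)))] := by
  have hlm : 0 < lam + mu := by positivity
  have hb : √(lam + mu) ≠ 0 := (sqrt_pos.2 hlm).ne'
  have hcosh : cosh z = cosh (z / 2) ^ 2 + sinh (z / 2) ^ 2 := by rw [← cosh_two_mul]; ring_nf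
  have hsinh : sinh z = 2 * sinh (z / 2) * cosh (z / 2) := by rw [← sinh_two_mul]; ring_nf
  rw [Matrix.mul_assoc (Nmat lam y)⁻¹, Nmat_mul_Nmat_inv hlm, ← hz, hcosh, hsinh,
    Nmat_inv_mul_mul_Nmat hlam hb, sqrt_mul hlam.le, sq_sqrt hlm.le]
  ext i j
  fin_cases i <;> fin_cases j <;> simp <;> field_simp <;> ring_nf <;>
    simp only [sq_sqrt hlam.le, sq_sqrt hlm.le] <;> ring
end

section
/- Let λ > 0, μ > 0 and u < v, set w = (1/2)√(λ+μ)·(v−u), C_0 = (1,0)ᵀ, γ_0 = −(μ/(λ√(λ+μ)))·e^{−√λ u}·sinh w/(√λ·cosh w + √(λ+μ)·sinh w), and A_1 = γ_0·M(u)^{−1}N(u)C_0 + (μ/(λ(λ+μ)))·M(u)^{−1}C_0. Then for every x ∈ ℝ, the first entry of the vector M(x)·A_1 equals (μ/(√λ·(λ+μ)))·cosh(√(λ+μ)·(x−(u+v)/2))/(√λ·cosh w + √(λ+μ)·sinh w). -/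
/-!
Write `s = √(λ+μ)`. Since `M(x)` is a fundamental matrix of `f'' = s² f` in the coordinates
`(f, f')`, the product `M(x) M(u)⁻¹` is the propagator from `u` to `x`, with first row
`(cosh (s(x-u)), sinh (s(x-u)) / s)`. As `N(u) C₀ = e^{√λ u} (1, √λ)`, the first entry of `M(x) A₁`
is `γ₀ e^{√λ u} (cosh y + (√λ/s) sinh y) + μ/(λ s²) cosh y` with `y = s(x-u)`, and the value of `γ₀`
makes this collapse, by `cosh (y - w) = cosh y cosh w - sinh y sinh w`, to a multiple of
`cosh (y - w) = cosh (s(x - (u+v)/2))`.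
-/

open Matrix Real

/-- The propagator over time `t` of `f'' = r² f`, acting on `(f, f')`. -/
noncomputable def transferMat (r t : ℝ) : Matrix (Fin 2) (Fin 2) ℝ :=
  !![cosh (r * t), sinh (r * t) / r; r * sinh (r * t), cosh (r * t)]

theorem transferMat_mulVec_apply_zero (r t : ℝ) (y : Fin 2 → ℝ) :
    (transferMat r t *ᵥ y) 0 = cosh (r * t) * y 0 + sinh (r * t) / r * y 1 := by
  simp [transferMat, mulVec, dotProduct, Fin.sum_univ_two]

theorem det_Nmat (lam x : ℝ) : (Nmat lam x).det = -2 * √lam := by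
  have h := Real.exp_add (√lam * x) (-(√lam * x))
  rw [add_neg_cancel, Real.exp_zero] at h
  rw [Nmat, det_fin_two_of]
  linear_combination (2 * √lam) * h

theorem Nmat_eq_transferMat_mul {lam : ℝ} (hlam : 0 < lam) (x u : ℝ) :
    Nmat lam x = transferMat (√lam) (x - u) * Nmat lam u := by
  have hr : √lam ≠ 0 := (Real.sqrt_pos.mpr hlam).ne'
  obtain ⟨t, rfl⟩ : ∃ t, x = t + u := ⟨x - u, by ring⟩
  rw [add_sub_cancel_right, Nmat, Nmat, transferMat]
  ext i j
  fin_cases i <;> fin_cases j <;>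
    simp only [mul_add, exp_add, neg_add_rev, Real.exp_neg, Fin.zero_eta, Fin.mk_one, Fin.isValue,
      of_apply, cons_val', cons_val_zero, cons_val_one, cons_val_fin_one, cosh_eq, sinh_eq,
      Matrix.mul_apply, Fin.sum_univ_two, mul_neg] <;>
    field_simp <;> ring

theorem Nmat_mul_inv {lam : ℝ} (hlam : 0 < lam) (x u : ℝ) :
    Nmat lam x * (Nmat lam u)⁻¹ = transferMat (√lam) (x - u) := by
  have hdet : IsUnit (Nmat lam u).det := by
    rw [det_Nmat]
    exact (mul_ne_zero (by norm_num) (Real.sqrt_pos.mpr hlam).ne').isUnit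
  rw [Nmat_eq_transferMat_mul hlam x u, Matrix.mul_assoc, mul_nonsing_inv _ hdet, Matrix.mul_one]

theorem Nmat_mulVec_inv_mulVec_apply_zero {lam : ℝ} (hlam : 0 < lam) (x u : ℝ)
    (y : Fin 2 → ℝ) :
    (Nmat lam x *ᵥ (Nmat lam u)⁻¹ *ᵥ y) 0 =
      cosh (√lam * (x - u)) * y 0 + sinh (√lam * (x - u)) / √lam * y 1 := by
  rw [mulVec_mulVec, Nmat_mul_inv hlam, transferMat_mulVec_apply_zero]

theorem Nmat_mulVec_vecCons_one_zero (lam u : ℝ) :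
    Nmat lam u *ᵥ ![1, 0] = Real.exp (√lam * u) • ![1, √lam] := by
  ext i
  fin_cases i <;> simp [Nmat, mulVec, mul_comm]

theorem mul_cosh_add_mul_sinh_pos {a b w : ℝ} (ha : 0 < a) (hb : 0 ≤ b) (hw : 0 ≤ w) :
    0 < a * cosh w + b * sinh w := by
  have := Real.sinh_nonneg_iff.mpr hw
  have := cosh_pos w
  positivity

/-- with `w = ½√(λ+μ)(v−u)`, `γ₀` as in the single-interval case and
`A₁ = γ₀ M(u)⁻¹N(u)C₀ + (μ/(λ(λ+μ))) M(u)⁻¹C₀`, the first entry of `M(x)A₁` equals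
`(μ/(√λ(λ+μ))) cosh(√(λ+μ)(x−(u+v)/2)) / (√λ cosh w + √(λ+μ) sinh w)`. -/
theorem statement11 (lam mu u v : ℝ) (hlam : 0 < lam) (hmu : 0 < mu) (huv : u < v)
    (w : ℝ) (hw : w = (1 / 2) * (Real.sqrt (lam + mu) * (v - u)))
    (γ₀ : ℝ)
    (hγ₀ : γ₀ = -(mu / (lam * Real.sqrt (lam + mu))) *
      (Real.exp (-(Real.sqrt lam * u)) * Real.sinh w /
        (Real.sqrt lam * Real.cosh w + Real.sqrt (lam + mu) * Real.sinh w)))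
    (A₁ : Fin 2 → ℝ)
    (hA₁ : A₁ = γ₀ • ((Nmat (lam + mu) u)⁻¹ * Nmat lam u).mulVec ![1, 0] +
      (mu / (lam * (lam + mu))) • (Nmat (lam + mu) u)⁻¹.mulVec ![1, 0]) :
    ∀ x : ℝ, ((Nmat (lam + mu) x).mulVec A₁) 0 =
      mu / (Real.sqrt lam * (lam + mu)) *
        (Real.cosh (Real.sqrt (lam + mu) * (x - (u + v) / 2)) /
          (Real.sqrt lam * Real.cosh w + Real.sqrt (lam + mu) * Real.sinh w)) := by
  intro x
  have hlm : 0 < lam + mu := by linarith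
  rw [hA₁, ← mulVec_mulVec, mulVec_add, mulVec_smul, mulVec_smul, Pi.add_apply, Pi.smul_apply,
    Pi.smul_apply, Nmat_mulVec_inv_mulVec_apply_zero hlm, Nmat_mulVec_inv_mulVec_apply_zero hlm,
    Nmat_mulVec_vecCons_one_zero]
  simp only [Pi.smul_apply, smul_eq_mul, cons_val_zero, cons_val_one]
  have hD : 0 < √lam * cosh w + √(lam + mu) * sinh w :=
    mul_cosh_add_mul_sinh_pos (Real.sqrt_pos.mpr hlam) (Real.sqrt_nonneg _)
      (by rw [hw]; have := sub_pos.mpr huv; positivity)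
  have hexp : rexp (-(√lam * u)) * rexp (√lam * u) = 1 := by rw [← Real.exp_add]; simp
  have hcosh : cosh (√(lam + mu) * (x - (u + v) / 2)) =
      cosh (√(lam + mu) * (x - u)) * cosh w - sinh (√(lam + mu) * (x - u)) * sinh w := by
    rw [← cosh_sub, hw]; ring_nf
  have hr2 : √lam ^ 2 = lam := Real.sq_sqrt hlam.le
  have hs2 : √(lam + mu) ^ 2 = lam + mu := Real.sq_sqrt hlm.le
  rw [hγ₀, hcosh]
  field_simp
  set r := √lam
  set s := √(lam + mu)
  set C := cosh (s * (x - u))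
  set S := sinh (s * (x - u))
  linear_combination (-r * (lam + mu) * sinh w * (s * C + r * S)) * hexp
    + (s ^ 2 * cosh w * C - s ^ 2 * sinh w * S) * hr2
    + (r ^ 2 * sinh w * S + r * s * sinh w * C) * hs2
end

section
/- Let λ > 0, n ≥ 1, u_1 < u_2 < … < u_n real numbers and μ_1, …, μ_n > 0. For i ∈ {1,…,n} set P̄_i = (1/√λ)·((√λ+μ_i, μ_i e^{−2√λ u_i}), (−μ_i e^{2√λ u_i}, √λ−μ_i)) and Q̄_i = (μ_i/√λ)·((e^{−√λ u_i}, 0), (−e^{√λ u_i}, 0)). Define R̄_0 = I, R̄_i = P̄_i ⋯ P̄_1, S̄_0 = 0, S̄_i = (1/λ)·Σ_{j=1}^{i} P̄_i ⋯ P̄_{j+1} Q̄_j, and, assuming the first entry of R̄_n C_0 is nonzero, γ̄_0 = (first entry of S̄_n C_0)/(first entry of R̄_n C_0) and B̄_i = S̄_i C_0 − γ̄_0 R̄_i C_0, where C_0 = (1,0)ᵀ. Then for every i ∈ {1,…,n}, (1,0)·N(u_i)·B̄_i = (1,0)·N(u_i)·B̄_{i−1}, where (1,0)·N(u_i) is the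 first row (e^{√λ u_i}, e^{−√λ u_i}) of N(u_i). -/
/-!
The first row `r = (e^{√λ u}, e^{−√λ u})` of `N(u)` is a left fixed vector of `P̄` and is
annihilated by `Q̄` (both built at the same point `u`). Hence `r R̄ᵢ = r R̄ᵢ₋₁` and `r S̄ᵢ = r S̄ᵢ₋₁`
when `r` is the row of `N(uᵢ)`, and the identity follows by linearity of `B̄ᵢ` in `S̄ᵢ` and `R̄ᵢ`.
-/

open Matrix Real

/-- `Sbar P Q lam i = (1/λ) Σ_{j=1}^{i} P i * ⋯ * P (j+1) * Q j`, with value `0` at `0`. -/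
noncomputable def Sbar (P Q : ℕ → Matrix (Fin 2) (Fin 2) ℝ) (lam : ℝ) :
    ℕ → Matrix (Fin 2) (Fin 2) ℝ
  | 0 => 0
  | i + 1 => (1 / lam) • Q (i + 1) + P (i + 1) * Sbar P Q lam i

section LeftInvariance

variable {P Q : ℕ → Matrix (Fin 2) (Fin 2) ℝ} {r : Fin 2 → ℝ} {i : ℕ}

lemma vecMul_Rprod_succ (hP : r ᵥ* P (i + 1) = r) :
    r ᵥ* Rprod P (i + 1) = r ᵥ* Rprod P i := by
  rw [Rprod, ← vecMul_vecMul, hP]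

lemma vecMul_Sbar_succ (lam : ℝ) (hP : r ᵥ* P (i + 1) = r) (hQ : r ᵥ* Q (i + 1) = 0) :
    r ᵥ* Sbar P Q lam (i + 1) = r ᵥ* Sbar P Q lam i := by
  rw [Sbar, vecMul_add, vecMul_smul, hQ, ← vecMul_vecMul, hP, smul_zero, zero_add]

end LeftInvariance

lemma vecMul_Nmat_first_row (lam x : ℝ) :
    ![1, 0] ᵥ* Nmat lam x = ![exp (√lam * x), exp (-(√lam * x))] := by
  ext j
  fin_cases j <;> simp [Nmat, vecMul, dotProduct]

lemma exp_row_vecMul_Pbar {s : ℝ} (hs : s ≠ 0) (m u : ℝ) :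
    ![exp (s * u), exp (-(s * u))] ᵥ* ((1 / s) •
      !![s + m, m * exp (-(2 * (s * u))); -(m * exp (2 * (s * u))), s - m]) =
      ![exp (s * u), exp (-(s * u))] := by
  have hexp : exp (2 * (s * u)) = exp (s * u) * exp (s * u) := by rw [two_mul, exp_add]
  ext j
  fin_cases j <;>
    simp only [vecMul, dotProduct, Fin.sum_univ_two, Matrix.smul_apply, of_apply, cons_val_zero,
      cons_val_one, cons_val_fin_one, smul_eq_mul, Real.exp_neg, hexp, Fin.zero_eta, Fin.mk_one] <;>
    field_simp <;> ring

lemma exp_row_vecMul_Qbar (s m u : ℝ) :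
    ![exp (s * u), exp (-(s * u))] ᵥ* ((m / s) •
      !![exp (-(s * u)), 0; -exp (s * u), 0]) = 0 := by
  ext j
  fin_cases j
  · simp only [vecMul, dotProduct, Fin.sum_univ_two, Matrix.smul_apply, of_apply, cons_val_zero,
      cons_val_one, cons_val_fin_one, smul_eq_mul, Fin.zero_eta, Pi.zero_apply]
    ring
  · simp [vecMul, dotProduct]

theorem statement15_general (lam : ℝ) (hlam : 0 < lam) (n : ℕ)
    (u μ : ℕ → ℝ)
    (P Q : ℕ → Matrix (Fin 2) (Fin 2) ℝ)
    (hP : ∀ i, P i = (1 / Real.sqrt lam) •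
      !![Real.sqrt lam + μ i, μ i * Real.exp (-(2 * (Real.sqrt lam * u i)));
         -(μ i * Real.exp (2 * (Real.sqrt lam * u i))), Real.sqrt lam - μ i])
    (hQ : ∀ i, Q i = (μ i / Real.sqrt lam) •
      !![Real.exp (-(Real.sqrt lam * u i)), 0;
         -(Real.exp (Real.sqrt lam * u i)), 0])
    (γ₀ : ℝ)
    (Bbar : ℕ → Fin 2 → ℝ)
    (hB : ∀ i, Bbar i =
      (Sbar P Q lam i).mulVec ![1, 0] - γ₀ • (Rprod P i).mulVec ![1, 0]) :
    ∀ i, 1 ≤ i → i ≤ n →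
      dotProduct (Matrix.vecMul ![1, 0] (Nmat lam (u i))) (Bbar i) =
        dotProduct (Matrix.vecMul ![1, 0] (Nmat lam (u i))) (Bbar (i - 1)) := by
  intro i hi _
  obtain ⟨k, rfl⟩ : ∃ k, i = k + 1 := ⟨i - 1, by omega⟩
  set r := ![1, 0] ᵥ* Nmat lam (u (k + 1))
  have hr : r = ![exp (√lam * u (k + 1)), exp (-(√lam * u (k + 1)))] := vecMul_Nmat_first_row ..
  have hPfix : r ᵥ* P (k + 1) = r := by
    rw [hr, hP, exp_row_vecMul_Pbar (sqrt_pos.2 hlam).ne']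
  have hQnull : r ᵥ* Q (k + 1) = 0 := by
    rw [hr, hQ, exp_row_vecMul_Qbar]
  simp only [Nat.add_sub_cancel, hB, dotProduct_sub, dotProduct_smul, dotProduct_mulVec]
  rw [vecMul_Sbar_succ lam hPfix hQnull, vecMul_Rprod_succ hPfix]

/-- with the local-time matrices `P̄ᵢ, Q̄ᵢ` at points `u₁ < … < uₙ`,
the vectors `B̄ᵢ = S̄ᵢC₀ − γ̄₀R̄ᵢC₀` satisfy `(1,0)N(uᵢ)B̄ᵢ = (1,0)N(uᵢ)B̄ᵢ₋₁` for each
`i ∈ {1,…,n}`. -/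
theorem statement15 (lam : ℝ) (hlam : 0 < lam) (n : ℕ) (hn : 1 ≤ n)
    (u μ : ℕ → ℝ)
    (hu : ∀ i j, 1 ≤ i → i < j → j ≤ n → u i < u j)
    (hμ : ∀ i, 1 ≤ i → i ≤ n → 0 < μ i)
    (P Q : ℕ → Matrix (Fin 2) (Fin 2) ℝ)
    (hP : ∀ i, P i = (1 / Real.sqrt lam) •
      !![Real.sqrt lam + μ i, μ i * Real.exp (-(2 * (Real.sqrt lam * u i)));
         -(μ i * Real.exp (2 * (Real.sqrt lam * u i))), Real.sqrt lam - μ i])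
    (hQ : ∀ i, Q i = (μ i / Real.sqrt lam) •
      !![Real.exp (-(Real.sqrt lam * u i)), 0;
         -(Real.exp (Real.sqrt lam * u i)), 0])
    (hden : ((Rprod P n).mulVec ![1, 0]) 0 ≠ 0)
    (γ₀ : ℝ)
    (hγ₀ : γ₀ = ((Sbar P Q lam n).mulVec ![1, 0]) 0 / ((Rprod P n).mulVec ![1, 0]) 0)
    (Bbar : ℕ → Fin 2 → ℝ)
    (hB : ∀ i, Bbar i =
      (Sbar P Q lam i).mulVec ![1, 0] - γ₀ • (Rprod P i).mulVec ![1, 0]) :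
    ∀ i, 1 ≤ i → i ≤ n →
      dotProduct (Matrix.vecMul ![1, 0] (Nmat lam (u i))) (Bbar i) =
        dotProduct (Matrix.vecMul ![1, 0] (Nmat lam (u i))) (Bbar (i - 1)) :=
  statement15_general lam hlam n u μ P Q hP hQ γ₀ Bbar hB
end

section
/- Let λ > 0, μ > 0 and u ∈ ℝ. Set P̄ = (1/√λ)·((√λ+μ, μe^{−2√λ u}), (−μe^{2√λ u}, √λ−μ)), Q̄ = (μ/√λ)·((e^{−√λ u}, 0), (−e^{√λ u}, 0)), C_0 = (1,0)ᵀ, D_0 = (0,1)ᵀ, R̄_1 = P̄, S̄_1 = (1/λ)·Q̄, γ̄_0 = (first entry of S̄_1 C_0)/(first entry of R̄_1 C_0), B̄_0 = −γ̄_0 C_0 and B̄_1 = S̄_1 C_0 − γ̄_0 R̄_1 C_0. Then B̄_0 = −(μ·e^{−√λ u}/(λ(√λ+μ)))·C_0 and B̄_1 = −(μ·e^{√λ u}/(λ(√λ+μ)))·D_0, and consequently for every x ∈ ℝ: the first entry of N(x)·B̄_0 equals −(μ/(λ(√λ+μ)))·e^{√λ(x−u)} and the first entry of N(x)·B̄_1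 equals −(μ/(λ(√λ+μ)))·e^{√λ(u−x)}. -/
open Matrix Real

/-- for the local time at a single point `u`:
`B̄₀ = −(μe^{−√λu}/(λ(√λ+μ)))C₀`, `B̄₁ = −(μe^{√λu}/(λ(√λ+μ)))D₀`, and the first
entries of `N(x)B̄₀` and `N(x)B̄₁` are `−(μ/(λ(√λ+μ)))e^{√λ(x−u)}` and
`−(μ/(λ(√λ+μ)))e^{√λ(u−x)}` respectively. -/
theorem statement16 (lam mu u : ℝ) (hlam : 0 < lam) (hmu : 0 < mu)
    (Pbar Qbar : Matrix (Fin 2) (Fin 2) ℝ)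
    (hP : Pbar = (1 / Real.sqrt lam) •
      !![Real.sqrt lam + mu, mu * Real.exp (-(2 * (Real.sqrt lam * u)));
         -(mu * Real.exp (2 * (Real.sqrt lam * u))), Real.sqrt lam - mu])
    (hQ : Qbar = (mu / Real.sqrt lam) •
      !![Real.exp (-(Real.sqrt lam * u)), 0;
         -(Real.exp (Real.sqrt lam * u)), 0])
    (R₁ S₁ : Matrix (Fin 2) (Fin 2) ℝ) (hR₁ : R₁ = Pbar) (hS₁ : S₁ = (1 / lam) • Qbar)
    (γ₀ : ℝ) (hγ₀ : γ₀ = (S₁.mulVec ![1, 0]) 0 / (R₁.mulVec ![1, 0]) 0)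
    (B₀ B₁ : Fin 2 → ℝ) (hB₀ : B₀ = -γ₀ • (![1, 0] : Fin 2 → ℝ))
    (hB₁ : B₁ = S₁.mulVec ![1, 0] - γ₀ • R₁.mulVec ![1, 0]) :
    B₀ = -(mu * Real.exp (-(Real.sqrt lam * u)) / (lam * (Real.sqrt lam + mu))) •
        (![1, 0] : Fin 2 → ℝ) ∧
    B₁ = -(mu * Real.exp (Real.sqrt lam * u) / (lam * (Real.sqrt lam + mu))) •
        (![0, 1] : Fin 2 → ℝ) ∧
    (∀ x : ℝ, ((Nmat lam x).mulVec B₀) 0 =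
      -(mu / (lam * (Real.sqrt lam + mu))) * Real.exp (Real.sqrt lam * (x - u))) ∧
    (∀ x : ℝ, ((Nmat lam x).mulVec B₁) 0 =
      -(mu / (lam * (Real.sqrt lam + mu))) * Real.exp (Real.sqrt lam * (u - x))) := by
  have hs : 0 < Real.sqrt lam := Real.sqrt_pos.mpr hlam
  have hsm : 0 < Real.sqrt lam + mu := by positivity
  have hlam' : lam ≠ 0 := hlam.ne'
  have hs' : Real.sqrt lam ≠ 0 := hs.ne'
  have hsm' : Real.sqrt lam + mu ≠ 0 := hsm.ne'
  subst hP hQ hR₁ hS₁ hB₀ hB₁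
  have hγ : γ₀ = mu * Real.exp (-(Real.sqrt lam * u)) / (lam * (Real.sqrt lam + mu)) := by
    rw [hγ₀]
    simp [Matrix.mulVec, dotProduct, Fin.sum_univ_succ]
    field_simp
  subst hγ
  have he : Real.exp (-(Real.sqrt lam * u)) = (Real.exp (Real.sqrt lam * u))⁻¹ :=
    Real.exp_neg _
  have h2 : Real.exp (2 * (Real.sqrt lam * u))
      = Real.exp (Real.sqrt lam * u) * Real.exp (Real.sqrt lam * u) := by
    rw [← Real.exp_add]; ring_nf
  have hep : (0:ℝ) < Real.exp (Real.sqrt lam * u) := Real.exp_pos _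
  refine ⟨rfl, ?_, ?_, ?_⟩
  · funext i
    fin_cases i <;>
      simp [Matrix.mulVec, dotProduct, Fin.sum_univ_succ, he, h2] <;>
      field_simp <;> ring
  · intro x
    simp [Nmat, Matrix.mulVec, dotProduct, Fin.sum_univ_succ, mul_sub,
      Real.exp_sub, Real.exp_add, he, h2]
    field_simp
  · intro x
    have h1 : Real.exp (Real.sqrt lam * (u - x))
        = Real.exp (Real.sqrt lam * u) * Real.exp (-(Real.sqrt lam * x)) := by
      rw [← Real.exp_add]; ring_nf
    have hx : Real.exp (-(Real.sqrt lam * x)) = (Real.exp (Real.sqrt lam * x))⁻¹ :=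
      Real.exp_neg _
    have hxp : (0:ℝ) < Real.exp (Real.sqrt lam * x) := Real.exp_pos _
    simp [Nmat, Matrix.mulVec, dotProduct, Fin.sum_univ_succ, h1, he, h2, hx]
    field_simp
    ring
end
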